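/- Parallel XOR reduction correctness: for vectors S : Fin M → Bool and the reduction pattern 'for k = 1, 2, 4, ... while k < M: for each i ≡ 0 mod 2k with i + k < M, set S[i] := S[i] XOR S[i+k]', the final value S[0] equals the XOR of all original entries S[0], ..., S[M-1]. -/

import Mathlib

/-!
After the round with stride `2 ^ n`, every index `i` divisible by `2 ^ (n + 1)` holds the
combination of the block `S i, …, S (i + 2 ^ (n + 1) - 1)` (truncated at `M`): the round merges
the blocks starting at `i` and `i + 2 ^ n`, which is legitimate because the operation is
associative with a two-sided identity. Once `2 ^ n ≥ M`, the block at `0` is the whole vector.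
-/

/-- One round of pairwise reduction with stride `k` and combining operation `op`. -/
def redStep (op : Bool → Bool → Bool) (M k : ℕ) (t : ℕ → Bool) : ℕ → Bool :=
  fun i => if i % (2 * k) = 0 ∧ i + k < M then op (t i) (t (i + k)) else t i

/-- Run the rounds for k = 1, 2, 4, ... while k < M. -/
def redRun (op : Bool → Bool → Bool) (M : ℕ) (t : ℕ → Bool) : ℕ → Bool :=
  (List.range M).foldl (fun t j => if 2 ^ j < M then redStep op M (2 ^ j) t else t) t

def redRounds (op : Bool → Bool → Bool) (M n : ℕ) (t : ℕ → Bool) : ℕ → Bool :=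
  (List.range n).foldl (fun t j => if 2 ^ j < M then redStep op M (2 ^ j) t else t) t

def blockFold (op : Bool → Bool → Bool) (e : Bool) (S : ℕ → Bool) (i len : ℕ) : Bool :=
  ((List.range' i len).map S).foldr op e

section

variable (op : Bool → Bool → Bool) (M : ℕ)

theorem redRun_eq_redRounds (t : ℕ → Bool) : redRun op M t = redRounds op M M t := rfl

theorem redRounds_zero (t : ℕ → Bool) : redRounds op M 0 t = t := rfl

theorem redRounds_succ_apply (n : ℕ) (t : ℕ → Bool) {i : ℕ} (hi : 2 ^ (n + 1) ∣ i) :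
    redRounds op M (n + 1) t i =
      if i + 2 ^ n < M then op (redRounds op M n t i) (redRounds op M n t (i + 2 ^ n))
      else redRounds op M n t i := by
  have hmod : i % (2 * 2 ^ n) = 0 := Nat.mod_eq_zero_of_dvd (by rwa [← pow_succ'])
  simp only [redRounds, List.range_succ, List.foldl_append, List.foldl_cons, List.foldl_nil]
  split_ifs with _ hlt hlt
  · simp [redStep, hmod, hlt]
  · simp [redStep, hlt]
  · omega
  · rfl

variable {op} {e : Bool}

theorem blockFold_one [Std.LawfulRightIdentity op e] (S : ℕ → Bool) (i : ℕ) :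
    blockFold op e S i 1 = S i := by
  simp [blockFold, Std.LawfulRightIdentity.right_id]

theorem blockFold_add [Std.Associative op] [Std.LawfulLeftIdentity op e]
    (S : ℕ → Bool) (i m n : ℕ) :
    blockFold op e S i (m + n) = op (blockFold op e S i m) (blockFold op e S (i + m) n) := by
  rw [blockFold, ← List.range'_append, List.map_append, List.foldr_append,
    ← Std.LawfulLeftIdentity.left_id (op := op) (List.foldr op e _), List.foldr_assoc, one_mul]
  rfl

theorem redRounds_apply_of_dvd [Std.Associative op] [Std.LawfulIdentity op e]
    (S : ℕ → Bool) (n : ℕ) {i : ℕ} (hi : 2 ^ n ∣ i) (hiM : i < M) :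
    redRounds op M n S i = blockFold op e S i (min (2 ^ n) (M - i)) := by
  induction n generalizing i with
  | zero => rw [redRounds_zero, pow_zero, show min 1 (M - i) = 1 by omega, blockFold_one]
  | succ n ih =>
    have hi' : 2 ^ n ∣ i := (pow_dvd_pow 2 n.le_succ).trans hi
    rw [redRounds_succ_apply op M n S hi, ih hi' hiM, pow_succ]
    split_ifs with hlt
    · have hnext : 2 ^ n ∣ i + 2 ^ n := dvd_add hi' dvd_rfl
      have hsplit : min (2 ^ n * 2) (M - i) = 2 ^ n + min (2 ^ n) (M - (i + 2 ^ n)) := by omega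
      rw [ih hnext hlt, hsplit, blockFold_add, show min (2 ^ n) (M - i) = 2 ^ n by omega]
    · congr 1
      omega

end

theorem stmt15 (M : ℕ) (hM : 0 < M) (S : ℕ → Bool) :
    redRun xor M S 0 = ((List.range M).map S).foldr xor false := by
  have hcover : min (2 ^ M) (M - 0) = M := by
    have : M < 2 ^ M := Nat.lt_two_pow_self
    omega
  rw [redRun_eq_redRounds, redRounds_apply_of_dvd M S M (dvd_zero _) hM, hcover, blockFold,
    List.range_eq_range']
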